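/- arXiv:2308.03049 — 2 statements merged into one kernel-verified Lean document; each statement's English description precedes it below -/
import Mathlib

section
/- Fix reals c, q, L > 0, D ≥ 1 and Q₂ ∈ ℝ. Then the point (x₀, y₀) := √(4c/(4D² − 1))·(Q₂ + q/2, L) lies in the topological frontier (boundary) of B₂ in ℝ². -/
open Real

noncomputable section

/-- the ellipse norm `‖(u₁,u₂)‖_@ = √(u₁² + c u₂²)`. -/
def nAt (c : ℝ) (u : ℝ × ℝ) : ℝ := Real.sqrt (u.1 ^ 2 + c * u.2 ^ 2)

/-- `Θ_x = √(x² + c q²)`. -/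
def thetaAt (c q x : ℝ) : ℝ := Real.sqrt (x ^ 2 + c * q ^ 2)

/-- the set `B₂`. -/
def B2 (c q L D Q2 : ℝ) : Set (ℝ × ℝ) :=
  {p | ∀ s i : ℤ, i ≠ 0 →
    D * q * |p.2| / thetaAt c q p.1 <
      nAt c
        (((s : ℝ) * q + (i : ℝ) * Q2) * p.1 * p.2 / (thetaAt c q p.1) ^ 2 -
            (i : ℝ) * L,
          ((s : ℝ) * q + (i : ℝ) * Q2) * q * p.2 / (thetaAt c q p.1) ^ 2)}

/-!
Multiplying the defining inequality of `B₂` by `Θ_x² = x² + c q²` makes it polynomial: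
`(D q y)² < (β y - ζ x)² + c (ζ q)²`. On the ray `t • P` through `P = T (Q₂ + q/2, L)`, where
`c = T² (D² - 1/4)`, it becomes `t² D² < t² (s - i/2)² + i² (D² - 1/4)`. This holds for `|t| < 1`,
since `2s - i` is odd when `i = ±1`, and is an equality for `t = 1`, `(s, i) = (0, 1)`. So the open
segment from `0` to `P` lies in `B₂` while `P` does not.
-/

lemma mem_frontier_of_openSegment_subset {𝕜 E : Type*} [Ring 𝕜] [LinearOrder 𝕜]
    [IsStrictOrderedRing 𝕜] [DenselyOrdered 𝕜] [TopologicalSpace 𝕜] [OrderTopology 𝕜]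
    [AddCommGroup E] [TopologicalSpace E] [ContinuousAdd E] [Module 𝕜 E] [ContinuousSMul 𝕜 E]
    {s : Set E} {x y : E} (hseg : openSegment 𝕜 x y ⊆ s) (hy : y ∉ s) : y ∈ frontier s :=
  ⟨closure_mono hseg (segment_subset_closure_openSegment (right_mem_segment 𝕜 x y)),
    fun h => hy (interior_subset h)⟩

lemma Int.four_le_sq_add_three_mul_sq {i : ℤ} (hi : i ≠ 0) (s : ℤ) :
    4 ≤ i ^ 2 + 3 * (2 * s - i) ^ 2 := by
  rcases eq_or_ne (2 * s) i with h | h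
  · subst h
    have : s ≠ 0 := by rintro rfl; exact hi rfl
    have : 0 < s ^ 2 := by positivity
    linarith
  · have : 2 * s - i ≠ 0 := sub_ne_zero.mpr h
    have : 0 < i ^ 2 := by positivity
    have : 0 < (2 * s - i) ^ 2 := by positivity
    linarith

lemma mul_sq_lt_of_lt_one {D t : ℝ} (hD : 1 ≤ D) (ht0 : 0 ≤ t) (ht1 : t < 1) {i : ℤ} (hi : i ≠ 0)
    (s : ℤ) : t * D ^ 2 < t * (s - i / 2) ^ 2 + i ^ 2 * (D ^ 2 - 1 / 4) := by
  have hi1 : (1 : ℝ) ≤ i ^ 2 := mod_cast (one_le_sq_iff_one_le_abs _).mpr (Int.one_le_abs hi)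
  have hsi : (4 : ℝ) ≤ i ^ 2 + 3 * (2 * s - i) ^ 2 := by
    exact_mod_cast Int.four_le_sq_add_three_mul_sq hi s
  -- The difference is affine in `(i², (2s - i)²)`, and `hi1`, `hsi` cut out a region with
  -- vertices `(1, 1)` and `(4, 0)`, where it is `(1 - t)(D² - 1/4)` and `(4 - t)D² - 1`.
  have h1 : 0 ≤ ((i : ℝ) ^ 2 - 1) * (D ^ 2 - 1 / 4 - t / 12) :=
    mul_nonneg (by linarith) (by nlinarith)
  have h2 : 0 < (1 - t) * (D ^ 2 - 1 / 4) := mul_pos (by linarith) (by nlinarith)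
  have h3 : 0 ≤ t * (i ^ 2 + 3 * (2 * s - i) ^ 2 - 4) := mul_nonneg ht0 (by linarith)
  linarith

lemma thetaAt_sq {c : ℝ} (hc : 0 ≤ c) (q x : ℝ) : thetaAt c q x ^ 2 = x ^ 2 + c * q ^ 2 :=
  Real.sq_sqrt (by positivity)

lemma thetaAt_pos {c q : ℝ} (hc : 0 < c) (hq : q ≠ 0) (x : ℝ) : 0 < thetaAt c q x :=
  Real.sqrt_pos.mpr (by positivity)

lemma lt_nAt_iff {c q D : ℝ} (hc : 0 < c) (hq : 0 < q) (hD : 0 ≤ D) (L b i x y : ℝ) :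
    D * q * |y| / thetaAt c q x <
        nAt c (b * x * y / thetaAt c q x ^ 2 - i * L, b * q * y / thetaAt c q x ^ 2) ↔
      (D * q * y) ^ 2 < (b * y - i * L * x) ^ 2 + c * (i * L * q) ^ 2 := by
  have hθ : 0 < thetaAt c q x := thetaAt_pos hc hq.ne' x
  have hθsq : 0 < thetaAt c q x ^ 2 := pow_pos hθ 2
  have hscaled : thetaAt c q x ^ 2 * ((b * x * y / thetaAt c q x ^ 2 - i * L) ^ 2 +
      c * (b * q * y / thetaAt c q x ^ 2) ^ 2) = (b * y - i * L * x) ^ 2 + c * (i * L * q) ^ 2 := by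
    have : 0 < x ^ 2 + c * q ^ 2 := by positivity
    rw [thetaAt_sq hc.le]
    field_simp
    ring
  rw [nAt, Real.lt_sqrt (div_nonneg (by positivity) hθ.le), div_pow,
    ← mul_lt_mul_iff_right₀ hθsq, mul_div_cancel₀ _ hθsq.ne', hscaled, mul_pow, sq_abs, ← mul_pow]

lemma mem_B2_iff {c q D : ℝ} (hc : 0 < c) (hq : 0 < q) (hD : 0 ≤ D) (L Q2 : ℝ) (p : ℝ × ℝ) :
    p ∈ B2 c q L D Q2 ↔ ∀ s i : ℤ, i ≠ 0 →
      (D * q * p.2) ^ 2 < ((s * q + i * Q2) * p.2 - i * L * p.1) ^ 2 + c * (i * L * q) ^ 2 := by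
  simp only [B2, Set.mem_ofPred_eq, lt_nAt_iff hc hq hD]

lemma smul_mem_B2_iff {c q L D T : ℝ} (hc : 0 < c) (hq : 0 < q) (hL : L ≠ 0) (hD : 0 ≤ D)
    (hT : T ≠ 0) (hcT : c = T ^ 2 * (D ^ 2 - 1 / 4)) (Q2 t : ℝ) :
    t • (T * (Q2 + q / 2), T * L) ∈ B2 c q L D Q2 ↔
      ∀ s i : ℤ, i ≠ 0 → t ^ 2 * D ^ 2 < t ^ 2 * (s - i / 2) ^ 2 + i ^ 2 * (D ^ 2 - 1 / 4) := by
  have hTLq : 0 < (T * L * q) ^ 2 := by positivity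
  refine (mem_B2_iff hc hq hD L Q2 _).trans (forall₂_congr fun s i => imp_congr_right fun _ => ?_)
  rw [← mul_lt_mul_iff_right₀ hTLq (b := t ^ 2 * D ^ 2)]
  simp only [Prod.smul_mk, smul_eq_mul]
  subst hcT
  convert Iff.rfl using 2 <;> first | rfl | ring

theorem statement13
    (c q L D Q2 : ℝ) (hc : 0 < c) (hq : 0 < q) (hL : 0 < L) (hD : 1 ≤ D) :
    (Real.sqrt (4 * c / (4 * D ^ 2 - 1)) * (Q2 + q / 2),
      Real.sqrt (4 * c / (4 * D ^ 2 - 1)) * L) ∈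
        frontier (B2 c q L D Q2) := by
  have h4D : 0 < 4 * D ^ 2 - 1 := by nlinarith
  set T := Real.sqrt (4 * c / (4 * D ^ 2 - 1))
  have hT : T ≠ 0 := (Real.sqrt_pos.mpr (by positivity)).ne'
  have hcT : c = T ^ 2 * (D ^ 2 - 1 / 4) := by
    rw [Real.sq_sqrt (by positivity)]
    field_simp
  have hray := smul_mem_B2_iff hc hq hL.ne' (by linarith) hT hcT Q2
  set P : ℝ × ℝ := (T * (Q2 + q / 2), T * L)
  refine mem_frontier_of_openSegment_subset (x := 0) (𝕜 := ℝ) ?_ ?_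
  · rw [openSegment_eq_image']
    rintro _ ⟨t, ⟨ht0, ht1⟩, rfl⟩
    simp only [zero_add, sub_zero, hray]
    exact fun s i hi => mul_sq_lt_of_lt_one hD (sq_nonneg t) (by nlinarith) hi s
  · rw [← one_smul ℝ P, hray]
    exact fun h => absurd (h 0 1 one_ne_zero) (by norm_num)
end
end

section
/- Let ‖·‖ be an arbitrary norm on ℝ^d. Let (a_k)_{k≥0} and (b_k)_{k≥0} be sequences in ℝ^d such that: (1) a_k → t for some t ≠ 0; (2) b_k ≠ 0 for all k; (3) b_k/‖b_k‖ → t/‖t‖. Then for all sufficiently large k one has ‖a_k‖ < ‖a_k + b_k‖. -/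
/-!
Write `s = ‖b‖`, `c = ‖t‖` and `w = b/s - t/c`. Splitting
`(s + c) • a = s • (a - t) + c • (a + (s/c) • t)` and comparing `a + (s/c) • t` with
`a + b = a + (s/c) • t + s • w` gives `c ‖a‖ ≤ c ‖a + b‖ + s (‖a - t‖ + c ‖w‖ - ‖a‖)`.
Along the sequences, `‖a_k - t‖ + c ‖w_k‖ → 0` while `‖a_k‖ → c > 0`, so the last term is
eventually negative. Only the seminorm axioms and continuity of the norm enter, and every seminorm
on a finite-dimensional real space is continuous, being convex.
-/

open Real Filter

noncomputable section

/-- `N` is a norm on `ℝ^d = (Fin d → ℝ)`. -/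
def IsNormD {d : ℕ} (N : (Fin d → ℝ) → ℝ) : Prop :=
  (∀ u, 0 ≤ N u) ∧ (∀ u, N u = 0 ↔ u = 0) ∧
  (∀ (r : ℝ) (u : Fin d → ℝ), N (r • u) = |r| * N u) ∧
  (∀ u w : Fin d → ℝ, N (u + w) ≤ N u + N w)

namespace Seminorm

section Algebraic

variable {E : Type*} [AddCommGroup E] [Module ℝ E] (p : Seminorm ℝ E)

theorem lt_map_add_of_map_sub_add_lt {a b t : E} (ht : 0 < p t) (hb : 0 < p b)
    (h : p (a - t) + p t * p ((p b)⁻¹ • b - (p t)⁻¹ • t) < p a) :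
    p a < p (a + b) := by
  set s := p b
  set c := p t
  set u : E := c⁻¹ • t
  set w : E := s⁻¹ • b - u
  have hcu : c • u = t := smul_inv_smul₀ ht.ne' t
  have hsw : s • w = b - s • u := by rw [smul_sub, smul_inv_smul₀ hb.ne']
  have hsplit : p ((s + c) • a) ≤ s * p (a - t) + c * p (a + s • u) := by
    have : (s + c) • a = s • (a - t) + c • (a + s • u) := by rw [← hcu]; module
    rw [this]
    refine (map_add_le_add p _ _).trans_eq ?_
    rw [map_smul_eq_mul, map_smul_eq_mul, norm_of_nonneg hb.le, norm_of_nonneg ht.le]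
  have hcompare : p (a + s • u) ≤ p (a + b) + s * p w := by
    have : a + s • u = (a + b) - s • w := by rw [hsw]; abel
    rw [this]
    refine (map_sub_le_add p _ _).trans_eq ?_
    rw [map_smul_eq_mul, norm_of_nonneg hb.le]
  rw [map_smul_eq_mul, norm_of_nonneg (by positivity)] at hsplit
  have key : c * p a < c * p (a + b) := by
    linarith [mul_lt_mul_of_pos_left h hb, mul_le_mul_of_nonneg_left hcompare ht.le]
  exact lt_of_mul_lt_mul_left key ht.le

end Algebraic

section Topological

variable {E : Type*} [AddCommGroup E] [Module ℝ E] [TopologicalSpace E] [ContinuousSub E]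
  (p : Seminorm ℝ E)

theorem eventually_lt_map_add (hp : Continuous p) {ι : Type*} {l : Filter ι} {a b : ι → E}
    {t : E} (ht : 0 < p t) (ha : Tendsto a l (nhds t))
    (hdir : Tendsto (fun k => (p (b k))⁻¹ • b k) l (nhds ((p t)⁻¹ • t))) :
    ∀ᶠ k in l, p (a k) < p (a k + b k) := by
  have hdist {x : ι → E} {y : E} (hx : Tendsto x l (nhds y)) :
      Tendsto (fun k => p (x k - y)) l (nhds 0) := by
    simpa [Function.comp_def] using (hp.tendsto _).comp (hx.sub_const y)
  have hunit : p ((p t)⁻¹ • t) = 1 := by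
    rw [map_smul_eq_mul, norm_inv, norm_of_nonneg ht.le, inv_mul_cancel₀ ht.ne']
  -- `p (b k) = 0` would make the normalized vector `0`, whose seminorm is not close to `1`.
  have hb : ∀ᶠ k in l, 0 < p (b k) := by
    have hnormalized := Tendsto.comp (hp.tendsto _) hdir
    rw [hunit] at hnormalized
    filter_upwards [hnormalized.eventually_const_lt zero_lt_one] with k hk
    refine (apply_nonneg p _).lt_of_ne fun h0 => ?_
    simp [← h0] at hk
  have hsmall : Tendsto (fun k => p (a k - t) + p t * p ((p (b k))⁻¹ • b k - (p t)⁻¹ • t))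
      l (nhds 0) := by
    simpa using (hdist ha).add ((hdist hdir).const_mul (p t))
  filter_upwards [hsmall.eventually_lt ((hp.tendsto t).comp ha) ht, hb] with k hk hbk
  exact p.lt_map_add_of_map_sub_add_lt ht hbk hk

end Topological

theorem continuous_of_finiteDimensional {E : Type*} [NormedAddCommGroup E] [NormedSpace ℝ E]
    [FiniteDimensional ℝ E] (p : Seminorm ℝ E) : Continuous p :=
  continuousOn_univ.1 (p.convexOn.continuousOn isOpen_univ)

end Seminorm

def IsNormD.toSeminorm {d : ℕ} {N : (Fin d → ℝ) → ℝ} (hN : IsNormD N) :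
    Seminorm ℝ (Fin d → ℝ) :=
  Seminorm.of N hN.2.2.2 fun r u => by rw [hN.2.2.1, Real.norm_eq_abs]

theorem statement17_general {d : ℕ}
    (N : (Fin d → ℝ) → ℝ) (hN : IsNormD N)
    (a b : ℕ → Fin d → ℝ) (t : Fin d → ℝ) (ht : t ≠ 0)
    (ha : Tendsto a atTop (nhds t))
    (hdir : Tendsto (fun k => (N (b k))⁻¹ • b k) atTop (nhds ((N t)⁻¹ • t))) :
    ∀ᶠ k in atTop, N (a k) < N (a k + b k) := by
  have hNt : 0 < N t := (hN.1 t).lt_of_ne fun h => ht ((hN.2.1 t).1 h.symm)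
  exact hN.toSeminorm.eventually_lt_map_add hN.toSeminorm.continuous_of_finiteDimensional hNt ha
    hdir

theorem statement17 {d : ℕ}
    (N : (Fin d → ℝ) → ℝ) (hN : IsNormD N)
    (a b : ℕ → Fin d → ℝ) (t : Fin d → ℝ) (ht : t ≠ 0)
    (ha : Tendsto a atTop (nhds t))
    (hb : ∀ k, b k ≠ 0)
    (hdir : Tendsto (fun k => (N (b k))⁻¹ • b k) atTop (nhds ((N t)⁻¹ • t))) :
    ∀ᶠ k in atTop, N (a k) < N (a k + b k) :=
  statement17_general N hN a b t ht ha hdir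
end
end
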